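/- arXiv:1409.2399 — 6 statements merged into one kernel-verified Lean document; each statement's English description precedes it below -/
import Mathlib

section
/- Let W ⊆ ℝ² be a workspace and let robots 1,…,n have radii r_1,…,r_n > 0, maximum speeds v_1,…,v_n > 0, and tasks ⟨s_1,g_1⟩,…,⟨s_n,g_n⟩ with the start bodies pairwise disjoint and the goal bodies pairwise disjoint. Suppose that for every robot i there exists a Lipschitz satisfying path p_i : [0,1] → ℝ² for robot i that is (S^{>i} ∪ G^{<i})-avoiding, i.e. closedBall (p_i u) r_i is disjoint from S^{>i} and from G^{<i} for all u ∈ [0,1]. Then there exist trajectories π_1,…,π_n such that each π_i is satisfying for robot i and every two distinct trajectories π_i, π_j are conflict-free, i.e. closedBall (π_i t) r_i ∩ closedBall (π_j t) r_j = ∅ for all t ≥ 0. (Theorem 1: existence of a sequential conflict-free solution.) -/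
open Metric Set
open scoped NNReal

local notation "Pt" => EuclideanSpace ℝ (Fin 2)

private lemma clamp_dist_le (a b : ℝ) :
    |min 1 (max 0 a) - min 1 (max 0 b)| ≤ |a - b| := by
  have h1 := abs_min_sub_min_le_max (1:ℝ) (max 0 a) 1 (max 0 b)
  have h2 : |max 0 a - max 0 b| ≤ |a - b| := by
    rw [max_comm 0 a, max_comm 0 b]; exact abs_max_sub_max_le_abs a b 0
  refine le_trans h1 (max_le ?_ h2)
  simp

/-- Theorem 1: if every robot `i` has a Lipschitz satisfying path avoiding the start
bodies of lower-priority robots `S^{>i}` and the goal bodies of higher-priority robots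
`G^{<i}`, then a conflict-free set of satisfying trajectories exists. -/
theorem sequential_solution_exists
    (n : ℕ) (W : Set Pt) (r : Fin n → ℝ) (v : Fin n → ℝ≥0) (s g : Fin n → Pt)
    (hr : ∀ i, 0 < r i) (hv : ∀ i, 0 < v i)
    (hS : ∀ i j, i ≠ j → closedBall (s i) (r i) ∩ closedBall (s j) (r j) = ∅)
    (hG : ∀ i j, i ≠ j → closedBall (g i) (r i) ∩ closedBall (g j) (r j) = ∅)
    (hpath : ∀ i : Fin n, ∃ p : ℝ → Pt,
      (∃ L : ℝ≥0, LipschitzOnWith L p (Icc 0 1)) ∧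
      p 0 = s i ∧ p 1 = g i ∧
      (∀ u ∈ Icc (0:ℝ) 1, closedBall (p u) (r i) ⊆ W) ∧
      (∀ u ∈ Icc (0:ℝ) 1,
        Disjoint (closedBall (p u) (r i)) (⋃ j ∈ Ioi i, closedBall (s j) (r j))) ∧
      (∀ u ∈ Icc (0:ℝ) 1,
        Disjoint (closedBall (p u) (r i)) (⋃ j ∈ Iio i, closedBall (g j) (r j)))) :
    ∃ π : Fin n → ℝ → Pt,
      (∀ i, π i 0 = s i ∧
        (∃ T : ℝ, 0 ≤ T ∧ ∀ t ≥ T, π i t = g i) ∧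
        (∀ t : ℝ, 0 ≤ t → closedBall (π i t) (r i) ⊆ W) ∧
        LipschitzOnWith (v i) (π i) (Ici 0)) ∧
      (∀ i j, i ≠ j → ∀ t : ℝ, 0 ≤ t →
        closedBall (π i t) (r i) ∩ closedBall (π j t) (r j) = ∅) := by
  classical
  choose p hLip h0 h1 hW hSav hGav using hpath
  choose L hL using hLip
  set d : Fin n → ℝ := fun i => ((L i : ℝ) + 1) / (v i : ℝ) with hd
  have hd0 : ∀ i, 0 < d i := fun i =>
    div_pos (by positivity) (by exact_mod_cast hv i)
  set T : Fin n → ℝ := fun i => ∑ j ∈ Finset.Iio i, d j with hTdef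
  have hT0 : ∀ i, 0 ≤ T i := fun i =>
    Finset.sum_nonneg fun j _ => (hd0 j).le
  set σ : Fin n → ℝ → ℝ := fun i t => min 1 (max 0 ((t - T i) / d i)) with hσdef
  have hσmem : ∀ i t, σ i t ∈ Icc (0:ℝ) 1 := by
    intro i t
    exact ⟨le_min zero_le_one (le_max_left _ _), min_le_left _ _⟩
  have hσ0 : ∀ i t, t ≤ T i → σ i t = 0 := by
    intro i t ht
    have : (t - T i) / d i ≤ 0 := div_nonpos_of_nonpos_of_nonneg (by linarith) (hd0 i).le
    simp [hσdef, max_eq_left this, min_eq_right zero_le_one]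
  have hσ1 : ∀ i t, T i + d i ≤ t → σ i t = 1 := by
    intro i t ht
    have h1' : (1:ℝ) ≤ (t - T i) / d i := (le_div_iff₀ (hd0 i)).2 (by linarith)
    have : (1:ℝ) ≤ max 0 ((t - T i) / d i) := le_trans h1' (le_max_right _ _)
    simp [hσdef, min_eq_left this]
  have hTlt : ∀ i j : Fin n, i < j → T i + d i ≤ T j := by
    intro i j hij
    have hsub : Finset.Iic i ⊆ Finset.Iio j := by
      intro k hk
      simp only [Finset.mem_Iic] at hk
      simp only [Finset.mem_Iio]
      exact lt_of_le_of_lt hk hij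
    have h1 : ∑ k ∈ Finset.Iic i, d k ≤ T j :=
      Finset.sum_le_sum_of_subset_of_nonneg hsub (fun k _ _ => (hd0 k).le)
    have h2 : ∑ k ∈ Finset.Iic i, d k = T i + d i := by
      rw [← Finset.Iio_insert, Finset.sum_insert (by simp)]
      ring
    linarith
  refine ⟨fun i t => p i (σ i t), fun i => ⟨?_, ⟨T i + d i, ?_, ?_⟩, ?_, ?_⟩, ?_⟩
  · show p i (σ i 0) = s i
    rw [hσ0 i 0 (hT0 i), h0]
  · linarith [hT0 i, (hd0 i).le]
  · intro t ht
    show p i (σ i t) = g i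
    rw [hσ1 i t ht, h1]
  · intro t _
    exact hW i _ (hσmem i t)
  · -- Lipschitz
    apply LipschitzOnWith.of_dist_le_mul
    intro t _ t' _
    have h1' : dist (p i (σ i t)) (p i (σ i t')) ≤ (L i : ℝ) * dist (σ i t) (σ i t') :=
      (hL i).dist_le_mul _ (hσmem i t) _ (hσmem i t')
    have h2' : dist (σ i t) (σ i t') ≤ dist t t' / d i := by
      have hc := clamp_dist_le ((t - T i) / d i) ((t' - T i) / d i)
      have heq : (t - T i) / d i - (t' - T i) / d i = (t - t') / d i := by ring
      rw [heq, abs_div, abs_of_pos (hd0 i)] at hc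
      rw [Real.dist_eq, Real.dist_eq]
      exact hc
    have hvpos : (0:ℝ) < (v i : ℝ) := by exact_mod_cast hv i
    have hLd : (L i : ℝ) * (dist t t' / d i) ≤ (v i : ℝ) * dist t t' := by
      have hdist : (0:ℝ) ≤ dist t t' := dist_nonneg
      have hLnn : (0:ℝ) ≤ (L i : ℝ) := (L i).coe_nonneg
      have hdval : d i = ((L i : ℝ) + 1) / (v i : ℝ) := rfl
      have heq : (L i : ℝ) * (dist t t' / d i)
          = ((L i : ℝ) * ((v i : ℝ) * dist t t')) / ((L i : ℝ) + 1) := by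
        rw [hdval, div_div_eq_mul_div, mul_div_assoc']; ring
      rw [heq, div_le_iff₀ (by positivity)]
      nlinarith [mul_nonneg hvpos.le hdist]
    calc dist (p i (σ i t)) (p i (σ i t'))
        ≤ (L i : ℝ) * dist (σ i t) (σ i t') := h1'
      _ ≤ (L i : ℝ) * (dist t t' / d i) :=
          mul_le_mul_of_nonneg_left h2' (L i).coe_nonneg
      _ ≤ (v i : ℝ) * dist t t' := hLd
  · -- conflict-free
    have key : ∀ i j : Fin n, i < j → ∀ t : ℝ,
        closedBall (p i (σ i t)) (r i) ∩ closedBall (p j (σ j t)) (r j) = ∅ := by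
      intro i j hij t
      rcases le_total t (T j) with hle | hge
      · have hj : p j (σ j t) = s j := by rw [hσ0 j t hle, h0]
        rw [hj]
        refine ((hSav i _ (hσmem i t)).mono_right ?_).inter_eq
        exact subset_biUnion_of_mem (u := fun k => closedBall (s k) (r k))
          (show j ∈ Ioi i from hij)
      · have ht' : T i + d i ≤ t := le_trans (hTlt i j hij) hge
        have hi : p i (σ i t) = g i := by rw [hσ1 i t ht', h1]
        rw [hi, Set.inter_comm]
        refine ((hGav j _ (hσmem j t)).mono_right ?_).inter_eq
        exact subset_biUnion_of_mem (u := fun k => closedBall (g k) (r k))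
          (show i ∈ Iio j from hij)
    intro i j hij t _
    rcases hij.lt_or_gt with h | h
    · exact key i j h t
    · rw [Set.inter_comm]; exact key j i h t
end

section
/- Let W ⊆ ℝ² be a workspace and let robots 1,…,n have radii r_1,…,r_n > 0, maximum speeds v_1,…,v_n > 0, and tasks ⟨s_1,g_1⟩,…,⟨s_n,g_n⟩ with the start bodies pairwise disjoint and the goal bodies pairwise disjoint. Suppose that for every robot i there exists a Lipschitz satisfying path p_i for robot i that is (S^{>i} ∪ G^{<i})-avoiding. Then there exist trajectories π_1,…,π_n such that each π_i is satisfying for robot i, each π_i is additionally S^{>i}-avoiding (closedBall (π_i t) r_i ∩ S^{>i} = ∅ for all t ≥ 0), and every two distinct trajectories are conflict-free. (Strengthened form of Theorem 1 underlying the completeness of revised prioritized planning: the solution can be chosen so that each robot avoids the start regions of all lower-priority robots at all times.) -/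
open Metric Set
open scoped NNReal

local notation "Pt" => EuclideanSpace ℝ (Fin 2)

private lemma clamp_mem (u : ℝ) : max 0 (min 1 u) ∈ Icc (0:ℝ) 1 :=
  ⟨le_max_left _ _, max_le (by norm_num) (min_le_left _ _)⟩

private lemma clamp_lip (u u' : ℝ) : |max 0 (min 1 u) - max 0 (min 1 u')| ≤ |u - u'| := by
  rw [max_comm 0 (min 1 u), max_comm 0 (min 1 u')]
  refine (abs_max_sub_max_le_abs _ _ _).trans ?_
  simpa using abs_min_sub_min_le_max 1 u 1 u' 

/-- Strengthened Theorem 1: the conflict-free solution can be chosen so that each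
robot's trajectory additionally avoids the start regions `S^{>i}` of all
lower-priority robots at all times. -/
theorem sequential_solution_exists_start_avoiding
    (n : ℕ) (W : Set Pt) (r : Fin n → ℝ) (v : Fin n → ℝ≥0) (s g : Fin n → Pt)
    (hr : ∀ i, 0 < r i) (hv : ∀ i, 0 < v i)
    (hS : ∀ i j, i ≠ j → closedBall (s i) (r i) ∩ closedBall (s j) (r j) = ∅)
    (hG : ∀ i j, i ≠ j → closedBall (g i) (r i) ∩ closedBall (g j) (r j) = ∅)
    (hpath : ∀ i : Fin n, ∃ p : ℝ → Pt,
      (∃ L : ℝ≥0, LipschitzOnWith L p (Icc 0 1)) ∧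
      p 0 = s i ∧ p 1 = g i ∧
      (∀ u ∈ Icc (0:ℝ) 1, closedBall (p u) (r i) ⊆ W) ∧
      (∀ u ∈ Icc (0:ℝ) 1,
        Disjoint (closedBall (p u) (r i)) (⋃ j ∈ Ioi i, closedBall (s j) (r j))) ∧
      (∀ u ∈ Icc (0:ℝ) 1,
        Disjoint (closedBall (p u) (r i)) (⋃ j ∈ Iio i, closedBall (g j) (r j)))) :
    ∃ π : Fin n → ℝ → Pt,
      (∀ i, π i 0 = s i ∧
        (∃ T : ℝ, 0 ≤ T ∧ ∀ t ≥ T, π i t = g i) ∧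
        (∀ t : ℝ, 0 ≤ t → closedBall (π i t) (r i) ⊆ W) ∧
        LipschitzOnWith (v i) (π i) (Ici 0)) ∧
      (∀ i, ∀ t : ℝ, 0 ≤ t →
        Disjoint (closedBall (π i t) (r i)) (⋃ j ∈ Ioi i, closedBall (s j) (r j))) ∧
      (∀ i j, i ≠ j → ∀ t : ℝ, 0 ≤ t →
        closedBall (π i t) (r i) ∩ closedBall (π j t) (r j) = ∅) := by
  -- choose paths
  choose p hLex hp0 hp1 hW hSav hGav using hpath
  choose L hL using hLex
  -- durations and start times
  set D : Fin n → ℝ := fun i => ((L i : ℝ) + 1) / (v i : ℝ) with hDdef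
  have hD : ∀ i, 0 < D i := fun i =>
    div_pos (by positivity) (by exact_mod_cast hv i)
  set a : Fin n → ℝ := fun i => ∑ j ∈ Finset.Iio i, D j with hadef
  have ha : ∀ i, 0 ≤ a i := fun i =>
    Finset.sum_nonneg fun j _ => (hD j).le
  have hab : ∀ i j : Fin n, i < j → a i + D i ≤ a j := by
    intro i j hij
    have h1 : a i + D i = ∑ k ∈ Finset.Iic i, D k := by
      rw [← Finset.Iio_insert, Finset.sum_insert (by simp)]
      ring
    rw [h1]
    exact Finset.sum_le_sum_of_subset_of_nonneg
      (fun k hk => Finset.mem_Iio.mpr (lt_of_le_of_lt (Finset.mem_Iic.mp hk) hij))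
      (fun k _ _ => (hD k).le)
  -- reparametrization
  set u : Fin n → ℝ → ℝ := fun i t => max 0 (min 1 ((t - a i) / D i)) with hudef
  have hu_mem : ∀ i t, u i t ∈ Icc (0:ℝ) 1 := fun i t => clamp_mem _
  have hu_zero : ∀ i t, t ≤ a i → u i t = 0 := by
    intro i t ht
    have : (t - a i) / D i ≤ 0 := div_nonpos_of_nonpos_of_nonneg (by linarith) (hD i).le
    simp only [hudef]
    rw [max_eq_left]
    exact le_trans (min_le_right _ _) this
  have hu_one : ∀ i t, a i + D i ≤ t → u i t = 1 := by
    intro i t ht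
    have : (1:ℝ) ≤ (t - a i) / D i := (le_div_iff₀ (hD i)).mpr (by linarith)
    simp only [hudef]
    rw [min_eq_left this, max_eq_right (by norm_num)]
  have hu_lip : ∀ i t t', |u i t - u i t'| ≤ |t - t'| / D i := by
    intro i t t'
    calc |u i t - u i t'| ≤ |(t - a i) / D i - (t' - a i) / D i| := clamp_lip _ _
      _ = |t - t'| / D i := by
          rw [div_sub_div_same, abs_div, abs_of_pos (hD i)]; ring_nf
  refine ⟨fun i t => p i (u i t), fun i => ⟨?_, ⟨a i + D i, by positivity, ?_⟩, ?_, ?_⟩,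
    ?_, ?_⟩
  · show p i (u i 0) = s i
    rw [hu_zero i 0 (ha i), hp0]
  · intro t ht
    show p i (u i t) = g i
    rw [hu_one i t ht, hp1]
  · intro t _
    exact hW i _ (hu_mem i t)
  · rw [lipschitzOnWith_iff_dist_le_mul]
    intro t _ t' _
    have h1 := (lipschitzOnWith_iff_dist_le_mul.mp (hL i)) _ (hu_mem i t) _ (hu_mem i t')
    have h2 : dist (u i t) (u i t') ≤ dist t t' / D i := by
      rw [Real.dist_eq, Real.dist_eq]; exact hu_lip i t t'
    have hvD : (L i : ℝ) ≤ (v i : ℝ) * D i := by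
      have hv' : (v i : ℝ) ≠ 0 := ne_of_gt (by exact_mod_cast hv i)
      have : (v i : ℝ) * D i = (L i : ℝ) + 1 := by
        rw [hDdef]
        field_simp
      rw [this]; linarith
    calc dist (p i (u i t)) (p i (u i t')) ≤ (L i : ℝ) * dist (u i t) (u i t') := h1
      _ ≤ (L i : ℝ) * (dist t t' / D i) := by
          exact mul_le_mul_of_nonneg_left h2 (L i).coe_nonneg
      _ ≤ (v i : ℝ) * dist t t' := by
          rw [mul_div_assoc']
          rw [div_le_iff₀ (hD i)]
          have := dist_nonneg (x := t) (y := t')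
          nlinarith
  · intro i t _
    exact hSav i _ (hu_mem i t)
  · -- conflict-freeness
    have key : ∀ i j : Fin n, i < j → ∀ t : ℝ,
        closedBall (p i (u i t)) (r i) ∩ closedBall (p j (u j t)) (r j) = ∅ := by
      intro i j hij t
      rw [← Set.disjoint_iff_inter_eq_empty]
      rcases le_total t (a j) with ht | ht
      · rw [hu_zero j t ht, hp0]
        exact (hSav i _ (hu_mem i t)).mono_right
          (Set.subset_biUnion_of_mem (u := fun k => closedBall (s k) (r k)) (Set.mem_Ioi.mpr hij))
      · have : a i + D i ≤ t := le_trans (hab i j hij) ht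
        rw [hu_one i t this, hp1]
        exact ((hGav j _ (hu_mem j t)).mono_right
          (Set.subset_biUnion_of_mem (u := fun k => closedBall (g k) (r k)) (Set.mem_Iio.mpr hij))).symm
    intro i j hij t _
    rcases lt_or_gt_of_ne hij with h | h
    · exact key i j h t
    · rw [Set.inter_comm]; exact key j i h t
end

section
/- Let W ⊆ ℝ² be a workspace and let robots 1,…,n have radii r_1,…,r_n > 0, maximum speeds v_1,…,v_n > 0, and tasks ⟨s_1,g_1⟩,…,⟨s_n,g_n⟩ with the start bodies pairwise disjoint and the goal bodies pairwise disjoint. Suppose that for every robot i there exists a Lipschitz satisfying path p_i for robot i that is (S^{>i} ∪ G^{<i})-avoiding. Then there exist time points 0 = T_0 ≤ T_1 ≤ ⋯ ≤ T_n and trajectories π_1,…,π_n such that each π_i is satisfying for robot i, π_i t = s_i for all t ∈ [0, T_{i-1}], π_i t = g_i for all t ≥ T_i, and every two distinct trajectories are conflict-free. (The sequential construction: the robots can be navigated one after another, each moving only during its own time window.) -/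
open Metric Set
open scoped NNReal

local notation "Pt" => EuclideanSpace ℝ (Fin 2)

/-- Sequential construction: there are time points `0 = T 0 ≤ T 1 ≤ ⋯ ≤ T n` such
that robot `i` (0-indexed) waits at its start until `T i`, moves during the window
`[T i, T (i+1)]`, and rests at its goal from `T (i+1)` on; the resulting satisfying
trajectories are pairwise conflict-free. -/
theorem sequential_windows_solution
    (n : ℕ) (W : Set Pt) (r : Fin n → ℝ) (v : Fin n → ℝ≥0) (s g : Fin n → Pt)
    (hr : ∀ i, 0 < r i) (hv : ∀ i, 0 < v i)
    (hS : ∀ i j, i ≠ j → closedBall (s i) (r i) ∩ closedBall (s j) (r j) = ∅)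
    (hG : ∀ i j, i ≠ j → closedBall (g i) (r i) ∩ closedBall (g j) (r j) = ∅)
    (hpath : ∀ i : Fin n, ∃ p : ℝ → Pt,
      (∃ L : ℝ≥0, LipschitzOnWith L p (Icc 0 1)) ∧
      p 0 = s i ∧ p 1 = g i ∧
      (∀ u ∈ Icc (0:ℝ) 1, closedBall (p u) (r i) ⊆ W) ∧
      (∀ u ∈ Icc (0:ℝ) 1,
        Disjoint (closedBall (p u) (r i)) (⋃ j ∈ Ioi i, closedBall (s j) (r j))) ∧
      (∀ u ∈ Icc (0:ℝ) 1,
        Disjoint (closedBall (p u) (r i)) (⋃ j ∈ Iio i, closedBall (g j) (r j)))) :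
    ∃ (T : Fin (n + 1) → ℝ) (π : Fin n → ℝ → Pt),
      T 0 = 0 ∧ Monotone T ∧
      (∀ i, π i 0 = s i ∧
        (∃ T' : ℝ, 0 ≤ T' ∧ ∀ t ≥ T', π i t = g i) ∧
        (∀ t : ℝ, 0 ≤ t → closedBall (π i t) (r i) ⊆ W) ∧
        LipschitzOnWith (v i) (π i) (Ici 0)) ∧
      (∀ i : Fin n, ∀ t ∈ Icc (0:ℝ) (T i.castSucc), π i t = s i) ∧
      (∀ i : Fin n, ∀ t : ℝ, T i.succ ≤ t → π i t = g i) ∧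
      (∀ i j, i ≠ j → ∀ t : ℝ, 0 ≤ t →
        closedBall (π i t) (r i) ∩ closedBall (π j t) (r j) = ∅) := by
  choose p hLip h0 h1 hW hSa hGa using hpath
  choose L hL using hLip
  -- durations
  set D : Fin n → ℝ := fun i => (L i : ℝ) / (v i : ℝ) + 1 with hDdef
  have hv' : ∀ i, (0:ℝ) < v i := fun i => by exact_mod_cast hv i
  have hD : ∀ i, 0 < D i := by
    intro i
    have := hv' i
    have hnn : (0:ℝ) ≤ (L i : ℝ) / (v i : ℝ) := div_nonneg (L i).coe_nonneg this.le
    simp only [hDdef]; linarith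
  have hvD : ∀ i, (L i : ℝ) ≤ (v i : ℝ) * D i := by
    intro i
    have hne : (v i : ℝ) ≠ 0 := (hv' i).ne'
    have : (v i : ℝ) * D i = (L i : ℝ) + (v i : ℝ) := by
      simp only [hDdef]; field_simp
    rw [this]
    linarith [(hv' i)]
  -- clamp to [0,1]
  set c : ℝ → ℝ := fun u => max 0 (min 1 u) with hcdef
  have hc_mem : ∀ u, c u ∈ Icc (0:ℝ) 1 :=
    fun u => ⟨le_max_left _ _, max_le zero_le_one (min_le_left _ _)⟩
  have hc0 : ∀ u : ℝ, u ≤ 0 → c u = 0 := by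
    intro u hu
    simp only [hcdef]
    rw [min_eq_right (by linarith), max_eq_left hu]
  have hc1 : ∀ u : ℝ, 1 ≤ u → c u = 1 := by
    intro u hu
    simp only [hcdef]
    rw [min_eq_left hu, max_eq_right zero_le_one]
  have hc_lip : ∀ a b : ℝ, |c a - c b| ≤ |a - b| := by
    intro a b
    simp only [hcdef]
    calc |max 0 (min 1 a) - max 0 (min 1 b)|
        ≤ max |(0:ℝ) - 0| |min 1 a - min 1 b| := abs_max_sub_max_le_max _ _ _ _
      _ ≤ |min 1 a - min 1 b| := by simp
      _ ≤ max |(1:ℝ) - 1| |a - b| := abs_min_sub_min_le_max _ _ _ _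
      _ ≤ |a - b| := by simp
  -- time points
  set Dn : ℕ → ℝ := fun k => if h : k < n then D ⟨k, h⟩ else 1 with hDndef
  have hDnn : ∀ k, 0 ≤ Dn k := by
    intro k; simp only [hDndef]; split
    · exact (hD _).le
    · exact zero_le_one
  have hDni : ∀ i : Fin n, Dn i.val = D i := fun i => dif_pos i.isLt
  set T : Fin (n + 1) → ℝ := fun k => ∑ j ∈ Finset.range k.val, Dn j with hTdef
  have hT0 : T 0 = 0 := by simp [hTdef]
  have hTmono : Monotone T := by
    intro a b hab
    exact Finset.sum_le_sum_of_subset_of_nonneg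
      (Finset.range_subset_range.2 hab) (fun k _ _ => hDnn k)
  have hTnn : ∀ k, 0 ≤ T k := fun k => hT0 ▸ hTmono (Fin.zero_le k)
  have hTsucc : ∀ i : Fin n, T i.succ = T i.castSucc + D i := by
    intro i
    simp only [hTdef, Fin.val_succ, Fin.coe_castSucc, Finset.sum_range_succ, hDni]
  -- trajectories
  set π : Fin n → ℝ → Pt := fun i t => p i (c ((t - T i.castSucc) / D i)) with hπdef
  have hstay : ∀ i : Fin n, ∀ t : ℝ, t ≤ T i.castSucc → π i t = s i := by
    intro i t ht
    have hq : (t - T i.castSucc) / D i ≤ 0 :=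
      div_nonpos_of_nonpos_of_nonneg (by linarith) (hD i).le
    simp only [hπdef]; rw [hc0 _ hq, h0]
  have hgoal : ∀ i : Fin n, ∀ t : ℝ, T i.succ ≤ t → π i t = g i := by
    intro i t ht
    have hq : (1:ℝ) ≤ (t - T i.castSucc) / D i := by
      rw [le_div_iff₀ (hD i)]
      have := hTsucc i
      linarith
    simp only [hπdef]; rw [hc1 _ hq, h1]
  have hπlip : ∀ i, LipschitzOnWith (v i) (π i) (Ici 0) := by
    intro i
    apply LipschitzOnWith.of_dist_le_mul
    intro x _ y _
    simp only [hπdef]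
    have h1' : dist (p i (c ((x - T i.castSucc) / D i))) (p i (c ((y - T i.castSucc) / D i)))
        ≤ (L i : ℝ) * dist (c ((x - T i.castSucc) / D i)) (c ((y - T i.castSucc) / D i)) :=
      (hL i).dist_le_mul _ (hc_mem _) _ (hc_mem _)
    have h2' : dist (c ((x - T i.castSucc) / D i)) (c ((y - T i.castSucc) / D i))
        ≤ dist x y / D i := by
      rw [Real.dist_eq, Real.dist_eq]
      refine (hc_lip _ _).trans_eq ?_
      rw [div_sub_div_same, sub_sub_sub_cancel_right, abs_div, abs_of_pos (hD i)]
    calc dist (p i (c ((x - T i.castSucc) / D i))) (p i (c ((y - T i.castSucc) / D i)))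
        ≤ (L i : ℝ) * (dist x y / D i) := h1'.trans (by
          exact mul_le_mul_of_nonneg_left h2' (L i).coe_nonneg)
      _ = ((L i : ℝ) / D i) * dist x y := by ring
      _ ≤ (v i : ℝ) * dist x y := by
          apply mul_le_mul_of_nonneg_right _ dist_nonneg
          exact (div_le_iff₀ (hD i)).2 (hvD i)
  have hconf : ∀ i j : Fin n, i < j → ∀ t : ℝ, 0 ≤ t →
      closedBall (π i t) (r i) ∩ closedBall (π j t) (r j) = ∅ := by
    intro i j hij t ht
    rw [← Set.disjoint_iff_inter_eq_empty]
    rcases le_or_gt t (T j.castSucc) with h | h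
    · rw [hstay j t h]
      have hd := hSa i _ (hc_mem ((t - T i.castSucc) / D i))
      refine Disjoint.mono_right ?_ hd
      exact subset_biUnion_of_mem (u := fun k => closedBall (s k) (r k)) (show j ∈ Ioi i from hij)
    · have hle : T i.succ ≤ T j.castSucc := by
        apply hTmono
        rw [Fin.le_def]
        simp only [Fin.val_succ, Fin.coe_castSucc]
        exact hij
      rw [hgoal i t (hle.trans h.le)]
      have hd := hGa j _ (hc_mem ((t - T j.castSucc) / D j))
      exact (Disjoint.mono_right (subset_biUnion_of_mem (u := fun k => closedBall (g k) (r k)) (show i ∈ Iio j from hij)) hd).symm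
  refine ⟨T, π, hT0, hTmono, ?_, ?_, fun i t ht => hgoal i t ht, ?_⟩
  · intro i
    refine ⟨hstay i 0 (hTnn _), ⟨T i.succ, hTnn _, fun t ht => hgoal i t ht⟩, ?_, hπlip i⟩
    intro t _
    simp only [hπdef]
    exact hW i _ (hc_mem _)
  · intro i t ht
    exact hstay i t ht.2
  · intro i j hij t ht
    rcases hij.lt_or_gt with h | h
    · exact hconf i j h t ht
    · rw [Set.inter_comm]
      exact hconf j i h t ht
end

section
/- Inductive extension step. Let W ⊆ ℝ² be a workspace and let robot i have radius r_i > 0, maximum speed v_i > 0 and task ⟨s_i,g_i⟩. Let π_1,…,π_{i-1} be trajectories of robots 1,…,i-1 (with radii r_1,…,r_{i-1} and goals g_1,…,g_{i-1}) such that each π_j eventually reaches and stays at its goal (there is a time t̄ ≥ 0 with π_j t = g_j for all j < i and all t ≥ t̄) and each π_j avoids the start body of robot i (closedBall (π_j t) r_j ∩ closedBall s_i r_i = ∅ for all t ≥ 0 and all j < i). Suppose there exists a Lipschitz satisfying path p for robot i that is G^{<i}-avoiding, where G^{<i} := ⋃_{j<i} closedBall g_j r_j. Then there exists a trajectory π_i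 that is satisfying for robot i and conflict-free with each π_j for j < i; moreover, if p is additionally A-avoiding for some set A ⊆ ℝ², then π_i can be chosen A-avoiding as well. -/
open Metric Set
open scoped NNReal

local notation "Pt" => EuclideanSpace ℝ (Fin 2)

/-- Inductive extension step: given trajectories of the `m` higher-priority robots
that eventually park at their goals and always avoid the start body of robot `i`,
and a Lipschitz satisfying path for robot `i` avoiding the goal bodies `G^{<i}`
(and additionally avoiding an arbitrary set `A`), there is a satisfying trajectory
for robot `i` that is conflict-free with all higher-priority robots (and `A`-avoiding). -/
theorem inductive_extension_step
    (W : Set Pt) (r : ℝ) (v : ℝ≥0) (s g : Pt)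
    (hr : 0 < r) (hv : 0 < v)
    (m : ℕ) (r' : Fin m → ℝ) (g' : Fin m → Pt) (π' : Fin m → ℝ → Pt)
    (hr' : ∀ j, 0 < r' j)
    (tbar : ℝ) (htbar : 0 ≤ tbar)
    (hreach : ∀ j, ∀ t : ℝ, tbar ≤ t → π' j t = g' j)
    (havoid : ∀ j, ∀ t : ℝ, 0 ≤ t →
      closedBall (π' j t) (r' j) ∩ closedBall s r = ∅)
    (p : ℝ → Pt) (A : Set Pt)
    (hLip : ∃ L : ℝ≥0, LipschitzOnWith L p (Icc 0 1))
    (hp0 : p 0 = s) (hp1 : p 1 = g)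
    (hpW : ∀ u ∈ Icc (0:ℝ) 1, closedBall (p u) r ⊆ W)
    (hpG : ∀ u ∈ Icc (0:ℝ) 1,
      Disjoint (closedBall (p u) r) (⋃ j, closedBall (g' j) (r' j)))
    (hpA : ∀ u ∈ Icc (0:ℝ) 1, Disjoint (closedBall (p u) r) A) :
    ∃ π : ℝ → Pt,
      (π 0 = s ∧
        (∃ T : ℝ, 0 ≤ T ∧ ∀ t ≥ T, π t = g) ∧
        (∀ t : ℝ, 0 ≤ t → closedBall (π t) r ⊆ W) ∧
        LipschitzOnWith v π (Ici 0)) ∧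
      (∀ j, ∀ t : ℝ, 0 ≤ t →
        closedBall (π t) r ∩ closedBall (π' j t) (r' j) = ∅) ∧
      (∀ t : ℝ, 0 ≤ t → Disjoint (closedBall (π t) r) A) := by
  obtain ⟨L, hL⟩ := hLip
  set D : ℝ := max 1 (L / v) with hD
  have hD1 : (1:ℝ) ≤ D := le_max_left _ _
  have hDpos : (0:ℝ) < D := lt_of_lt_of_le one_pos hD1
  have hLD : (L : ℝ) ≤ v * D := by
    have : (L : ℝ) / v ≤ D := le_max_right _ _
    calc (L : ℝ) = v * (L / v) := by
          field_simp
      _ ≤ v * D := by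
          exact mul_le_mul_of_nonneg_left this (by positivity)
  set u : ℝ → ℝ := fun t => min 1 (max 0 ((t - tbar) / D)) with hu
  have hu_mem : ∀ t, u t ∈ Icc (0:ℝ) 1 := fun t =>
    ⟨le_min zero_le_one (le_max_left _ _), min_le_left _ _⟩
  have hu0 : ∀ t, t ≤ tbar → u t = 0 := by
    intro t ht
    have h1 : (t - tbar) / D ≤ 0 := by
      apply div_nonpos_of_nonpos_of_nonneg <;> linarith
    simp [hu, max_eq_left h1, min_eq_right (zero_le_one)]
  have hu1 : ∀ t, tbar + D ≤ t → u t = 1 := by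
    intro t ht
    have h1 : (1:ℝ) ≤ (t - tbar) / D := (le_div_iff₀ hDpos).2 (by linarith)
    have h2 : (1:ℝ) ≤ max 0 ((t - tbar) / D) := le_trans h1 (le_max_right _ _)
    simp [hu, min_eq_left h2]
  have hu_lip : ∀ a b : ℝ, |u a - u b| ≤ |a - b| / D := by
    intro a b
    have h1 : |u a - u b| ≤ |max 0 ((a - tbar)/D) - max 0 ((b - tbar)/D)| := by
      have := abs_min_sub_min_le_max (1:ℝ) (max 0 ((a - tbar)/D)) 1 (max 0 ((b - tbar)/D))
      simpa using this
    have h2 : |max 0 ((a - tbar)/D) - max 0 ((b - tbar)/D)| ≤ |(a - tbar)/D - (b - tbar)/D| := by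
      have := abs_max_sub_max_le_abs ((a - tbar)/D) ((b - tbar)/D) 0
      simpa [max_comm] using this
    have h3 : (a - tbar)/D - (b - tbar)/D = (a - b)/D := by ring
    calc |u a - u b| ≤ |(a - tbar)/D - (b - tbar)/D| := le_trans h1 h2
      _ = |a - b| / D := by rw [h3, abs_div, abs_of_pos hDpos]
  refine ⟨fun t => p (u t), ⟨?_, ⟨tbar + D, by linarith, ?_⟩, ?_, ?_⟩, ?_, ?_⟩
  · show p (u 0) = s
    rw [hu0 0 htbar, hp0]
  · intro t ht; show p (u t) = g; rw [hu1 t ht, hp1]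
  · intro t _; exact hpW _ (hu_mem t)
  · rw [lipschitzOnWith_iff_dist_le_mul]
    intro a _ b _
    have h1 : dist (p (u a)) (p (u b)) ≤ L * dist (u a) (u b) :=
      hL.dist_le_mul _ (hu_mem a) _ (hu_mem b)
    have h2 : dist (u a) (u b) ≤ dist a b / D := by
      rw [Real.dist_eq, Real.dist_eq]; exact hu_lip a b
    calc dist (p (u a)) (p (u b)) ≤ L * (dist a b / D) :=
          le_trans h1 (mul_le_mul_of_nonneg_left h2 L.coe_nonneg)
      _ = (L / D) * dist a b := by ring
      _ ≤ v * dist a b := by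
          apply mul_le_mul_of_nonneg_right _ dist_nonneg
          rw [div_le_iff₀ hDpos]; exact hLD
  · intro j t ht
    rcases le_or_gt tbar t with h | h
    · rw [hreach j t h]
      have := hpG (u t) (hu_mem t)
      rw [Set.disjoint_iff_inter_eq_empty] at this
      have hsub : closedBall (p (u t)) r ∩ closedBall (g' j) (r' j) ⊆
          closedBall (p (u t)) r ∩ ⋃ k, closedBall (g' k) (r' k) :=
        inter_subset_inter_right _ (subset_iUnion (fun k => closedBall (g' k) (r' k)) j)
      exact eq_empty_of_subset_empty (this ▸ hsub)
    · show closedBall (p (u t)) r ∩ _ = ∅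
      rw [hu0 t h.le, hp0, Set.inter_comm]
      exact havoid j t ht
  · intro t _; exact hpA _ (hu_mem t)
end

section
/- Wait-then-follow construction. Let robot i have radius r_i > 0, maximum speed v_i > 0 and task ⟨s_i,g_i⟩ in workspace W ⊆ ℝ², with closedBall s_i r_i ⊆ W. Let t̄ ≥ 0 and let σ : ℝ≥0 → ℝ² be a satisfying trajectory for robot i. Define π : ℝ≥0 → ℝ² by π t := s_i for t ≤ t̄ and π t := σ (t − t̄) for t ≥ t̄. Then π is a satisfying trajectory for robot i. Moreover, if π_j is a trajectory of another robot j of radius r_j > 0 with goal g_j such that (a) closedBall (π_j t) r_j ∩ closedBall s_i r_i = ∅ for all t ∈ [0, t̄], (b) π_j t = g_j for all t ≥ t̄, and (c) closedBall (σ u) r_i ∩ closedBall g_j r_j = ∅ for all u ≥ 0, then π and π_j are conflict-free. -/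
open Metric Set
open scoped NNReal

local notation "Pt" => EuclideanSpace ℝ (Fin 2)

/-! The waiting-then-following trajectory is `σ` reparametrized by the clock `t ↦ max (t - t̄) 0`,
which is `1`-Lipschitz and maps everything into `[0, ∞)`, so it inherits every property of `σ`:
same start, same goal (reached `t̄` later), bodies inside `W`, and speed bound. Conflict-freeness
is a case split at `t̄`: before it, robot `j` avoids the start body; after it, robot `j` is parked
at its goal, whose body `σ` avoids. -/

section Trajectory

/-- The paper's `π t := s` for `t ≤ t̄`, `π t := σ (t - t̄)` for `t ≥ t̄`, written with `σ 0 = s`. -/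
def waitThenFollow {α : Type*} (σ : ℝ → α) (tbar t : ℝ) : α :=
  σ (max (t - tbar) 0)

lemma eqOn_waitThenFollow {α : Type*} {σ π : ℝ → α} {s : α} {tbar : ℝ} (hσ0 : σ 0 = s)
    (hwait : ∀ t ∈ Icc (0 : ℝ) tbar, π t = s) (hfollow : ∀ t : ℝ, tbar ≤ t → π t = σ (t - tbar)) :
    EqOn π (waitThenFollow σ tbar) (Ici 0) := by
  intro t (ht : 0 ≤ t)
  rcases le_total t tbar with h | h
  · rw [hwait t ⟨ht, h⟩, waitThenFollow, max_eq_right (sub_nonpos.mpr h), hσ0]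
  · rw [hfollow t h, waitThenFollow, max_eq_left (sub_nonneg.mpr h)]

variable {E : Type*} [PseudoMetricSpace E]

def IsSatisfyingTrajectory (W : Set E) (r : ℝ) (v : ℝ≥0) (s g : E) (π : ℝ → E) : Prop :=
  π 0 = s ∧
    (∃ T : ℝ, 0 ≤ T ∧ ∀ t ≥ T, π t = g) ∧
    (∀ t : ℝ, 0 ≤ t → closedBall (π t) r ⊆ W) ∧
    LipschitzOnWith v π (Ici 0)

lemma lipschitzWith_max_sub_const_zero (a : ℝ) : LipschitzWith 1 fun t : ℝ => max (t - a) 0 :=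
  (IsometryEquiv.subRight a).isometry.lipschitz.max_const 0

lemma LipschitzOnWith.lipschitzWith_waitThenFollow {σ : ℝ → E} {K : ℝ≥0}
    (hσ : LipschitzOnWith K σ (Ici 0)) (tbar : ℝ) : LipschitzWith K (waitThenFollow σ tbar) := by
  have hclock := (lipschitzWith_max_sub_const_zero tbar).lipschitzOnWith (s := univ)
  have := hσ.comp hclock fun t _ => mem_Ici.mpr (le_max_right (t - tbar) 0)
  rw [mul_one, lipschitzOnWith_univ] at this
  exact this

namespace IsSatisfyingTrajectory

variable {W : Set E} {r : ℝ} {v : ℝ≥0} {s g : E} {σ π : ℝ → E}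

lemma congr (hσ : IsSatisfyingTrajectory W r v s g σ) (h : EqOn π σ (Ici 0)) :
    IsSatisfyingTrajectory W r v s g π := by
  obtain ⟨hσ0, ⟨T, hT, hTg⟩, hσW, hσL⟩ := hσ
  refine ⟨(h (mem_Ici.mpr le_rfl)).trans hσ0, ⟨T, hT, fun t ht => ?_⟩, fun t ht => ?_, ?_⟩
  · rw [h (hT.trans ht : 0 ≤ t), hTg t ht]
  · rw [h (ht : 0 ≤ t)]
    exact hσW t ht
  · intro x hx y hy
    rw [h hx, h hy]
    exact hσL hx hy

lemma waitThenFollow (hσ : IsSatisfyingTrajectory W r v s g σ)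
    {tbar : ℝ} (htbar : 0 ≤ tbar) :
    IsSatisfyingTrajectory W r v s g (waitThenFollow σ tbar) := by
  obtain ⟨hσ0, ⟨T, hT, hTg⟩, hσW, hσL⟩ := hσ
  refine ⟨?_, ⟨tbar + T, by linarith, fun t ht => ?_⟩, fun t _ => ?_,
    (hσL.lipschitzWith_waitThenFollow tbar).lipschitzOnWith⟩
  · rw [_root_.waitThenFollow, zero_sub, max_eq_right (neg_nonpos.mpr htbar), hσ0]
  · exact hTg _ (le_max_of_le_left (by linarith))
  · exact hσW _ (le_max_right _ _)

end IsSatisfyingTrajectory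

lemma waitThenFollow_conflictFree {σ πj : ℝ → E} {s gj : E} {ri rj tbar : ℝ} (hσ0 : σ 0 = s)
    (hstart : ∀ t ∈ Icc (0 : ℝ) tbar, closedBall (πj t) rj ∩ closedBall s ri = ∅)
    (hpark : ∀ t : ℝ, tbar ≤ t → πj t = gj)
    (hgoal : ∀ u : ℝ, 0 ≤ u → closedBall (σ u) ri ∩ closedBall gj rj = ∅)
    {t : ℝ} (ht : 0 ≤ t) :
    closedBall (waitThenFollow σ tbar t) ri ∩ closedBall (πj t) rj = ∅ := by
  rcases le_total t tbar with h | h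
  · rw [waitThenFollow, max_eq_right (sub_nonpos.mpr h), hσ0, inter_comm]
    exact hstart t ⟨ht, h⟩
  · rw [hpark t h]
    exact hgoal _ (le_max_right _ _)

end Trajectory

theorem wait_then_follow_general
    (W : Set Pt) (ri : ℝ) (vi : ℝ≥0) (si gi : Pt)
    (tbar : ℝ) (htbar : 0 ≤ tbar)
    (σ : ℝ → Pt)
    (hσ : σ 0 = si ∧
      (∃ T : ℝ, 0 ≤ T ∧ ∀ t ≥ T, σ t = gi) ∧
      (∀ t : ℝ, 0 ≤ t → closedBall (σ t) ri ⊆ W) ∧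
      LipschitzOnWith vi σ (Ici 0))
    (π : ℝ → Pt)
    (hπ1 : ∀ t ∈ Icc (0:ℝ) tbar, π t = si)
    (hπ2 : ∀ t : ℝ, tbar ≤ t → π t = σ (t - tbar)) :
    (π 0 = si ∧
      (∃ T : ℝ, 0 ≤ T ∧ ∀ t ≥ T, π t = gi) ∧
      (∀ t : ℝ, 0 ≤ t → closedBall (π t) ri ⊆ W) ∧
      LipschitzOnWith vi π (Ici 0)) ∧
    (∀ (rj : ℝ) (gj : Pt) (πj : ℝ → Pt), 0 < rj →
      (∀ t ∈ Icc (0:ℝ) tbar, closedBall (πj t) rj ∩ closedBall si ri = ∅) →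
      (∀ t : ℝ, tbar ≤ t → πj t = gj) →
      (∀ u : ℝ, 0 ≤ u → closedBall (σ u) ri ∩ closedBall gj rj = ∅) →
      ∀ t : ℝ, 0 ≤ t → closedBall (π t) ri ∩ closedBall (πj t) rj = ∅) := by
  have hπ : EqOn π (waitThenFollow σ tbar) (Ici 0) := eqOn_waitThenFollow hσ.1 hπ1 hπ2
  have hσ' : IsSatisfyingTrajectory W ri vi si gi σ := hσ
  refine ⟨(hσ'.waitThenFollow htbar).congr hπ, fun rj gj πj _ hstart hpark hgoal t ht => ?_⟩
  rw [hπ (show t ∈ Ici 0 from ht)]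
  exact waitThenFollow_conflictFree hσ.1 hstart hpark hgoal ht

/-- Wait-then-follow construction: waiting at the start until time `tbar` and then
following a satisfying trajectory `σ` yields a satisfying trajectory; it is
conflict-free with any other robot's trajectory that avoids the start body during
the waiting period, is parked at its goal from `tbar` on, and whose goal body is
avoided by `σ`. -/
theorem wait_then_follow
    (W : Set Pt) (ri : ℝ) (vi : ℝ≥0) (si gi : Pt)
    (hri : 0 < ri) (hvi : 0 < vi) (hsW : closedBall si ri ⊆ W)
    (tbar : ℝ) (htbar : 0 ≤ tbar)
    (σ : ℝ → Pt)
    (hσ : σ 0 = si ∧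
      (∃ T : ℝ, 0 ≤ T ∧ ∀ t ≥ T, σ t = gi) ∧
      (∀ t : ℝ, 0 ≤ t → closedBall (σ t) ri ⊆ W) ∧
      LipschitzOnWith vi σ (Ici 0))
    (π : ℝ → Pt)
    (hπ1 : ∀ t ∈ Icc (0:ℝ) tbar, π t = si)
    (hπ2 : ∀ t : ℝ, tbar ≤ t → π t = σ (t - tbar)) :
    (π 0 = si ∧
      (∃ T : ℝ, 0 ≤ T ∧ ∀ t ≥ T, π t = gi) ∧
      (∀ t : ℝ, 0 ≤ t → closedBall (π t) ri ⊆ W) ∧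
      LipschitzOnWith vi π (Ici 0)) ∧
    (∀ (rj : ℝ) (gj : Pt) (πj : ℝ → Pt), 0 < rj →
      (∀ t ∈ Icc (0:ℝ) tbar, closedBall (πj t) rj ∩ closedBall si ri = ∅) →
      (∀ t : ℝ, tbar ≤ t → πj t = gj) →
      (∀ u : ℝ, 0 ≤ u → closedBall (σ u) ri ∩ closedBall gj rj = ∅) →
      ∀ t : ℝ, 0 ≤ t → closedBall (π t) ri ∩ closedBall (πj t) rj = ∅) :=
  wait_then_follow_general W ri vi si gi tbar htbar σ hσ π hπ1 hπ2
end

section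
/- Every trajectory coordination query between distinct endpoints of a valid infrastructure is solvable. Suppose W ⊆ ℝ² together with a set of endpoints E ⊆ ℝ² is a valid infrastructure for radius r > 0. Let robots 1,…,n have radii r_1,…,r_n with 0 < r_i ≤ r, maximum speeds v_1,…,v_n > 0, and tasks ⟨s_i,g_i⟩ with s_i, g_i ∈ E, such that the starts s_1,…,s_n are pairwise distinct, the goals g_1,…,g_n are pairwise distinct, and s_i ≠ g_j whenever i ≠ j. Then there exist trajectories π_1,…,π_n such that each π_i is satisfying for robot i and every two distinct trajectories π_i, π_j are conflict-free. -/
/-!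
The robots move one at a time, in index order. Robot `i` follows its infrastructure path from
`s i` to `g i`, slowed down enough to respect its speed bound, during its own time window, and
rests at `s i` before and at `g i` after it. So at every moment, of any two robots at least one
rests at one of its endpoints, which by the distinctness assumptions is neither endpoint of the
other robot's path; and that path keeps an `r`-clearance from all such endpoints.
-/

open Metric Set
open scoped NNReal

local notation "Pt" => EuclideanSpace ℝ (Fin 2)

/-- A workspace `W` with endpoints `E` is a valid infrastructure for radius `r` if
any two endpoints `e, e'` are connected by a Lipschitz path lying in the
`r`-interior of `W` minus the `r`-balls around all other endpoints. -/
def ValidInfrastructure (W E : Set Pt) (r : ℝ) : Prop :=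
  ∀ e ∈ E, ∀ e' ∈ E, ∃ p : ℝ → Pt,
    (∃ L : ℝ≥0, LipschitzOnWith L p (Icc 0 1)) ∧
    p 0 = e ∧ p 1 = e' ∧
    ∀ u ∈ Icc (0:ℝ) 1,
      closedBall (p u) r ⊆ W \ ⋃ f ∈ E \ {e, e'}, closedBall f r

noncomputable def timedPath {α : Type*} (p : ℝ → α) (a d t : ℝ) : α :=
  p (projIcc 0 1 zero_le_one ((t - a) / d))

section timedPath

variable {α : Type*} {a d t : ℝ}

lemma timedPath_of_le (p : ℝ → α) (hd : 0 ≤ d) (ht : t ≤ a) : timedPath p a d t = p 0 := by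
  rw [timedPath, projIcc_of_le_left _ (div_nonpos_of_nonpos_of_nonneg (by linarith) hd)]

lemma timedPath_of_add_le (p : ℝ → α) (hd : 0 < d) (ht : a + d ≤ t) :
    timedPath p a d t = p 1 := by
  rw [timedPath, projIcc_of_right_le _ ((one_le_div₀ hd).2 (by linarith))]

lemma timedPath_mem_image (p : ℝ → α) (a d t : ℝ) : timedPath p a d t ∈ p '' Icc 0 1 :=
  mem_image_of_mem p (projIcc 0 1 zero_le_one _).2

lemma timedPath_eq_one_or_eq_zero (p q : ℝ → α) {b e : ℝ} (hd : 0 < d) (he : 0 ≤ e)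
    (hab : a + d ≤ b) (t : ℝ) : timedPath p a d t = p 1 ∨ timedPath q b e t = q 0 := by
  rcases le_or_gt (a + d) t with ht | ht
  · exact .inl (timedPath_of_add_le p hd ht)
  · exact .inr (timedPath_of_le q he (ht.le.trans hab))

lemma timedPath_mem_ends_or_mem_ends {ι : Type*} [LinearOrder ι] (p : ι → ℝ → α)
    {a d : ι → ℝ} (hd : ∀ i, 0 < d i) (hwindow : ∀ i j, i < j → a i + d i ≤ a j)
    {i j : ι} (hij : i ≠ j) (t : ℝ) :
    timedPath (p i) (a i) (d i) t ∈ ({p i 0, p i 1} : Set α) ∨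
      timedPath (p j) (a j) (d j) t ∈ ({p j 0, p j 1} : Set α) := by
  rcases hij.lt_or_gt with h | h
  · rcases timedPath_eq_one_or_eq_zero (p i) (p j) (hd i) (hd j).le (hwindow i j h) t with e | e
    <;> simp [e]
  · rcases timedPath_eq_one_or_eq_zero (p j) (p i) (hd j) (hd i).le (hwindow j i h) t with e | e
    <;> simp [e]

lemma LipschitzOnWith.lipschitzWith_timedPath [PseudoMetricSpace α] {p : ℝ → α}
    {L v : ℝ≥0} (hp : LipschitzOnWith L p (Icc 0 1)) (hd : 0 < d) (hL : (L : ℝ) ≤ v * d) :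
    LipschitzWith v (timedPath p a d) := by
  refine LipschitzWith.of_dist_le_mul fun t t' => ?_
  have hproj : dist (projIcc (0 : ℝ) 1 zero_le_one ((t - a) / d) : ℝ)
      (projIcc 0 1 zero_le_one ((t' - a) / d)) ≤ dist t t' / d := by
    calc _ ≤ dist ((t - a) / d) ((t' - a) / d) := by
          simpa [Subtype.dist_eq] using (LipschitzWith.projIcc zero_le_one).dist_le_mul _ _
      _ = dist t t' / d := by
          rw [Real.dist_eq, Real.dist_eq, ← sub_div, abs_div, abs_of_pos hd,
            sub_sub_sub_cancel_right]
  calc dist (timedPath p a d t) (timedPath p a d t')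
      ≤ L * (dist t t' / d) :=
        (hp.dist_le_mul _ (projIcc 0 1 _ _).2 _ (projIcc 0 1 _ _).2).trans
          (mul_le_mul_of_nonneg_left hproj L.2)
    _ ≤ v * dist t t' := by
        rw [mul_div_assoc', div_le_iff₀ hd, mul_right_comm]
        exact mul_le_mul_of_nonneg_right hL dist_nonneg

end timedPath

lemma exists_sequential_schedule {ι : Type*} [LinearOrder ι] [LocallyFiniteOrderBot ι]
    (d : ι → ℝ) (hd : ∀ i, 0 ≤ d i) :
    ∃ a : ι → ℝ, (∀ i, 0 ≤ a i) ∧ ∀ i j, i < j → a i + d i ≤ a j := by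
  refine ⟨fun i => ∑ k ∈ Finset.Iio i, d k, fun i => Finset.sum_nonneg fun k _ => hd k,
    fun i j hij => ?_⟩
  rw [Finset.sum_Iio_add_eq_sum_Iic]
  exact Finset.sum_le_sum_of_subset_of_nonneg (fun k hk => by
    simp only [Finset.mem_Iic, Finset.mem_Iio] at hk ⊢; exact hk.trans_lt hij)
    fun k _ _ => hd k

lemma disjoint_closedBall_of_subset_sdiff {α : Type*} [PseudoMetricSpace α] {W S : Set α}
    {x f : α} {r ρ ρ' : ℝ} (hx : closedBall x r ⊆ W \ ⋃ f ∈ S, closedBall f r)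
    (hf : f ∈ S) (hρ : ρ ≤ r) (hρ' : ρ' ≤ r) :
    Disjoint (closedBall x ρ) (closedBall f ρ') := by
  have : Disjoint (closedBall x r) (closedBall f r) :=
    disjoint_left.2 fun _ hy hy' => (hx hy).2 (mem_biUnion hf hy')
  exact this.mono (closedBall_subset_closedBall hρ) (closedBall_subset_closedBall hρ')

theorem valid_infrastructure_coordination_solvable_general
    (W E : Set Pt) (r : ℝ)
    (hinfra : ValidInfrastructure W E r)
    (n : ℕ) (rad : Fin n → ℝ) (v : Fin n → ℝ≥0) (s g : Fin n → Pt)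
    (hrad : ∀ i, 0 < rad i ∧ rad i ≤ r) (hv : ∀ i, 0 < v i)
    (hsE : ∀ i, s i ∈ E) (hgE : ∀ i, g i ∈ E)
    (hs : ∀ i j, i ≠ j → s i ≠ s j)
    (hg : ∀ i j, i ≠ j → g i ≠ g j)
    (hsg : ∀ i j, i ≠ j → s i ≠ g j) :
    ∃ π : Fin n → ℝ → Pt,
      (∀ i, π i 0 = s i ∧
        (∃ T : ℝ, 0 ≤ T ∧ ∀ t ≥ T, π i t = g i) ∧
        (∀ t : ℝ, 0 ≤ t → closedBall (π i t) (rad i) ⊆ W) ∧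
        LipschitzOnWith (v i) (π i) (Ici 0)) ∧
      (∀ i j, i ≠ j → ∀ t : ℝ, 0 ≤ t →
        closedBall (π i t) (rad i) ∩ closedBall (π j t) (rad j) = ∅) := by
  choose p hpLip hp0 hp1 hpW using fun i => hinfra (s i) (hsE i) (g i) (hgE i)
  choose L hL using hpLip
  -- `+ 1` keeps the duration positive when `L i = 0`
  set d : Fin n → ℝ := fun i => (L i + 1) / v i
  have hd : ∀ i, 0 < d i := fun i => div_pos (by positivity) (NNReal.coe_pos.2 (hv i))
  have hLd : ∀ i, (L i : ℝ) ≤ v i * d i := fun i => by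
    rw [mul_div_cancel₀ _ (NNReal.coe_pos.2 (hv i)).ne']; linarith
  obtain ⟨a, ha, hwindow⟩ := exists_sequential_schedule d fun i => (hd i).le
  set π : Fin n → ℝ → Pt := fun i => timedPath (p i) (a i) (d i)
  have avoid : ∀ i j, i ≠ j → ∀ x ∈ p i '' Icc 0 1, ∀ f ∈ ({s j, g j} : Set Pt),
      Disjoint (closedBall x (rad i)) (closedBall f (rad j)) := by
    rintro i j hij _ ⟨u, hu, rfl⟩ f hf
    refine disjoint_closedBall_of_subset_sdiff (hpW i u hu) ?_ (hrad i).2 (hrad j).2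
    rcases hf with rfl | rfl
    · simp [hsE, hs j i hij.symm, hsg j i hij.symm]
    · simp [hgE, (hsg i j hij).symm, (hg i j hij).symm]
  refine ⟨π, fun i => ⟨?_, ⟨a i + d i, by linarith [ha i, hd i], fun t ht => ?_⟩,
    fun t _ => ?_, ((hL i).lipschitzWith_timedPath (hd i) (hLd i)).lipschitzOnWith⟩, ?_⟩
  · simp only [π, timedPath_of_le _ (hd i).le (ha i), hp0]
  · simp only [π, timedPath_of_add_le _ (hd i) ht, hp1]
  · obtain ⟨u, hu, hπu⟩ := timedPath_mem_image (p i) (a i) (d i) t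
    exact (closedBall_subset_closedBall (hrad i).2).trans
      ((hπu ▸ hpW i u hu).trans sdiff_subset)
  · intro i j hij t _
    rw [← disjoint_iff_inter_eq_empty]
    rcases timedPath_mem_ends_or_mem_ends p hd hwindow hij t with h | h
    <;> simp only [hp0, hp1] at h
    · exact (avoid j i hij.symm _ (timedPath_mem_image _ _ _ t) _ h).symm
    · exact avoid i j hij _ (timedPath_mem_image _ _ _ t) _ h

/-- Every trajectory coordination query between distinct endpoints of a valid
infrastructure is solvable: there exist pairwise conflict-free satisfying
trajectories for all robots. -/
theorem valid_infrastructure_coordination_solvable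
    (W E : Set Pt) (r : ℝ) (hr : 0 < r)
    (hinfra : ValidInfrastructure W E r)
    (n : ℕ) (rad : Fin n → ℝ) (v : Fin n → ℝ≥0) (s g : Fin n → Pt)
    (hrad : ∀ i, 0 < rad i ∧ rad i ≤ r) (hv : ∀ i, 0 < v i)
    (hsE : ∀ i, s i ∈ E) (hgE : ∀ i, g i ∈ E)
    (hs : ∀ i j, i ≠ j → s i ≠ s j)
    (hg : ∀ i j, i ≠ j → g i ≠ g j)
    (hsg : ∀ i j, i ≠ j → s i ≠ g j) :
    ∃ π : Fin n → ℝ → Pt,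
      (∀ i, π i 0 = s i ∧
        (∃ T : ℝ, 0 ≤ T ∧ ∀ t ≥ T, π i t = g i) ∧
        (∀ t : ℝ, 0 ≤ t → closedBall (π i t) (rad i) ⊆ W) ∧
        LipschitzOnWith (v i) (π i) (Ici 0)) ∧
      (∀ i j, i ≠ j → ∀ t : ℝ, 0 ≤ t →
        closedBall (π i t) (rad i) ∩ closedBall (π j t) (rad j) = ∅) :=
  valid_infrastructure_coordination_solvable_general W E r hinfra n rad v s g hrad hv hsE hgE hs hg
    hsg
end
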